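/- arXiv:1806.10660 — 3 statements merged into one kernel-verified Lean document; each statement's English description precedes it below -/
import Mathlib

section
/- Assume unit costs. For every j ∈ {1,…,B} and every permutation σ of Fin n, C₁^j(σ¹) ≤ C₁^j(σ); that is, among all permutations, a permutation listing the indices in nonincreasing order of p i minimizes the expected number of queries needed, on assignments of block M^j, until α_j true bits have been observed. -/
/-!
Writing the stopping time as a sum of tail indicators,
`C₁^j(σ) = ∑ₖ Pr(a ∈ M^j and fewer than α_j ones among the first k queried indices)`,
so it suffices to show that, for each `k`, the `k` indices with the largest `p` minimise
`Pr(a ∈ M^j, fewer than α_j ones on S)` over all `k`-sets `S`. Exchanging `i ∈ S` for `j ∉ S`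
with `p i ≤ p j` cannot increase this probability: the coordinate swap `a ↦ a ∘ (i j)` preserves
`M^j`, and of the two assignments in a swapped pair the one with fewer ones on `S` is the more
likely one. Finitely many exchanges turn any `k`-set into the top one.
-/

open Finset

/-- Number of true bits of an assignment. -/
def N1 {n : ℕ} (a : Fin n → Bool) : ℕ :=
  (Finset.univ.filter (fun i => a i = true)).card

/-- Probability of an assignment. -/
noncomputable def pr {n : ℕ} (p : Fin n → ℝ) (a : Fin n → Bool) : ℝ :=
  ∏ i, if a i then p i else 1 - p i

/-- Least `k` such that the first `k` entries of `l` contain at least `m`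
indices selected by `sel`. -/
noncomputable def stopCount {n : ℕ} (sel : Fin n → Bool) (m : ℕ) (l : List (Fin n)) : ℕ :=
  sInf {k | m ≤ ((l.take k).filter sel).length}

/-- `C₁^j(σ)`: expected number of queries, over the block `{a | αj ≤ N₁(a) < βj}`,
until `αj` ones have been observed, querying in the order `σ(0), σ(1), …`. -/
noncomputable def C1 {n : ℕ} (p : Fin n → ℝ) (αj βj : ℕ) (σ : Equiv.Perm (Fin n)) : ℝ :=
  ∑ a ∈ Finset.univ.filter (fun a : Fin n → Bool => αj ≤ N1 a ∧ N1 a < βj),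
    (stopCount a αj (List.ofFn (fun t => σ t)) : ℝ) * pr p a

theorem Nat.sInf_setOf_le_eq_card_filter_lt {g : ℕ → ℕ} (hg : Monotone g) {m N : ℕ}
    (hN : m ≤ g N) : sInf {k | m ≤ g k} = #((range N).filter fun k => g k < m) := by
  have hmem : m ≤ g (sInf {k | m ≤ g k}) := Nat.sInf_mem (s := {k | m ≤ g k}) ⟨N, hN⟩
  have hle : sInf {k | m ≤ g k} ≤ N := Nat.sInf_le hN
  suffices (range N).filter (fun k => g k < m) = range (sInf {k | m ≤ g k}) by
    rw [this, card_range]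
  ext k
  simp only [mem_filter, mem_range]
  constructor
  · rintro ⟨-, hk⟩
    by_contra! h
    exact (hk.trans_le (hmem.trans (hg h))).false
  · intro hk
    exact ⟨hk.trans_le hle, not_le.mp fun h => Nat.notMem_of_lt_sInf hk h⟩

theorem List.Nodup.length_filter_eq_card {α : Type*} [DecidableEq α] {l : List α} (hl : l.Nodup)
    (p : α → Bool) : (l.filter p).length = #(l.toFinset.filter fun x => p x = true) := by
  rw [← List.toFinset_filter, List.toFinset_card_of_nodup (hl.filter p)]

theorem List.Pairwise.rel_of_mem_take_of_not_mem_take {α : Type*} {R : α → α → Prop}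
    {l : List α} (hl : l.Pairwise R) {k : ℕ} {x y : α} (hx : x ∈ l.take k) (hy : y ∈ l)
    (hyk : y ∉ l.take k) : R x y := by
  rw [← List.take_append_drop k l, List.mem_append] at hy
  exact hl.rel_of_mem_take_of_mem_drop hx (hy.resolve_left hyk)

theorem Finset.card_filter_eq_card_filter_erase_add {ι : Type*} [DecidableEq ι] {S : Finset ι}
    {i : ι} (hi : i ∈ S) (q : ι → Prop) [DecidablePred q] :
    #(S.filter q) = #((S.erase i).filter q) + if q i then 1 else 0 := by
  rw [card_filter, card_filter, ← add_sum_erase _ _ hi, add_comm]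

theorem stopCount_eq_card_filter_lt {n : ℕ} {sel : Fin n → Bool} {m : ℕ} {l : List (Fin n)}
    (hm : m ≤ (l.filter sel).length) :
    stopCount sel m l = #((range l.length).filter fun k => ((l.take k).filter sel).length < m) :=
  Nat.sInf_setOf_le_eq_card_filter_lt
    (fun _ _ h => ((List.take_prefix_take_left h).sublist.filter sel).length_le)
    (by rwa [List.take_length])

theorem N1_comp {n : ℕ} (a : Fin n → Bool) (e : Equiv.Perm (Fin n)) : N1 (a ∘ e) = N1 a := by
  unfold N1
  rw [← Finset.card_map e.toEmbedding, Finset.map_filter]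
  simp

theorem sum_filter_N1_comp {n : ℕ} (P : ℕ → Prop) [DecidablePred P] (e : Equiv.Perm (Fin n))
    (f : (Fin n → Bool) → ℝ) :
    ∑ a ∈ univ.filter (fun a : Fin n → Bool => P (N1 a)), f (a ∘ e) =
      ∑ a ∈ univ.filter (fun a : Fin n → Bool => P (N1 a)), f a := by
  rw [sum_filter, sum_filter]
  exact Fintype.sum_equiv (e.symm.arrowCongr (Equiv.refl Bool)) _ _ fun a => by
    rw [show e.symm.arrowCongr (Equiv.refl Bool) a = a ∘ e from rfl, N1_comp]

theorem pr_eq_mul_mul_prod {n : ℕ} (p : Fin n → ℝ) (a : Fin n → Bool) {i j : Fin n}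
    (hij : i ≠ j) :
    pr p a = (if a i then p i else 1 - p i) * (if a j then p j else 1 - p j) *
      ∏ k ∈ (univ.erase i).erase j, if a k then p k else 1 - p k := by
  rw [pr, ← mul_prod_erase univ _ (mem_univ i),
    ← mul_prod_erase (univ.erase i) _ (mem_erase.mpr ⟨hij.symm, mem_univ j⟩), mul_assoc]

theorem pr_comp_swap {n : ℕ} (p : Fin n → ℝ) (a : Fin n → Bool) {i j : Fin n} (hij : i ≠ j) :
    pr p (a ∘ Equiv.swap i j) = (if a j then p i else 1 - p i) * (if a i then p j else 1 - p j) *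
      ∏ k ∈ (univ.erase i).erase j, if a k then p k else 1 - p k := by
  rw [pr_eq_mul_mul_prod p _ hij]
  refine congrArg₂ _ (by simp) (prod_congr rfl fun k hk => ?_)
  simp only [mem_erase] at hk
  simp [Equiv.swap_apply_of_ne_of_ne hk.2.1 hk.1]

theorem exchange_term_nonneg {x y : Bool} {c m : ℕ} {pi pj r : ℝ} (hij : pi ≤ pj) (hr : 0 ≤ r) :
    0 ≤ ((if c + (if x then 1 else 0) < m then 1 else 0) -
        (if c + (if y then 1 else 0) < m then 1 else 0) : ℝ) *
      ((if x then pi else 1 - pi) * (if y then pj else 1 - pj) * r -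
        (if y then pi else 1 - pi) * (if x then pj else 1 - pj) * r) := by
  cases x <;> cases y <;> simp only [Bool.false_eq_true, if_true, if_false, add_zero, sub_self,
    mul_zero, le_refl] <;> split_ifs <;> first | omega | nlinarith

noncomputable def probFewOnes {n : ℕ} (p : Fin n → ℝ) (P : ℕ → Prop) [DecidablePred P] (m : ℕ)
    (S : Finset (Fin n)) : ℝ :=
  ∑ a ∈ univ.filter (fun a : Fin n → Bool => P (N1 a)),
    (if #(S.filter fun i => a i = true) < m then 1 else 0) * pr p a

section Exchange

variable {n : ℕ} {p : Fin n → ℝ} (P : ℕ → Prop) [DecidablePred P] (m : ℕ)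

theorem probFewOnes_map_swap_le (hp : ∀ i, 0 ≤ p i ∧ p i ≤ 1) {S : Finset (Fin n)} {i j : Fin n}
    (hi : i ∈ S) (hj : j ∉ S) (hij : p i ≤ p j) :
    probFewOnes p P m (S.map (Equiv.swap i j).toEmbedding) ≤ probFewOnes p P m S := by
  have hne : i ≠ j := by rintro rfl; exact hj hi
  set e := Equiv.swap i j
  set A := univ.filter fun a : Fin n → Bool => P (N1 a)
  set u : (Fin n → Bool) → ℝ := fun a => if #(S.filter fun k => a k = true) < m then 1 else 0
  have hee : ∀ a : Fin n → Bool, a ∘ e ∘ e = a := fun a => by ext; simp [e]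
  -- Both sides have a second expression, obtained by reindexing along `a ↦ a ∘ e`; twice their
  -- difference is then the sum of the pair terms `hterm`.
  have hS : probFewOnes p P m S = ∑ a ∈ A, u a * pr p a := rfl
  have hS' : probFewOnes p P m S = ∑ a ∈ A, u (a ∘ e) * pr p (a ∘ e) :=
    (sum_filter_N1_comp P e fun a => u a * pr p a).symm
  have hSe : probFewOnes p P m (S.map e.toEmbedding) = ∑ a ∈ A, u (a ∘ e) * pr p a := by
    refine sum_congr rfl fun a _ => ?_
    rw [filter_map, card_map]
    rfl
  have hSe' : probFewOnes p P m (S.map e.toEmbedding) = ∑ a ∈ A, u a * pr p (a ∘ e) := by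
    rw [hSe, ← sum_filter_N1_comp P e]
    simp only [Function.comp_assoc, hee, A]
  have hterm : ∀ a, 0 ≤ (u a - u (a ∘ e)) * (pr p a - pr p (a ∘ e)) := by
    intro a
    have hfix : ∀ k ∈ S.erase i, e k = k := fun k hk =>
      Equiv.swap_apply_of_ne_of_ne (ne_of_mem_erase hk) fun h => hj (h ▸ mem_of_mem_erase hk)
    have hu : u a = if #((S.erase i).filter fun k => a k = true) + (if a i then 1 else 0) < m
        then 1 else 0 := by
      simp only [u, card_filter_eq_card_filter_erase_add hi]
    have hue : u (a ∘ e) = if #((S.erase i).filter fun k => a k = true) + (if a j then 1 else 0) < m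
        then 1 else 0 := by
      simp only [u, card_filter_eq_card_filter_erase_add hi]
      rw [filter_congr fun k hk => by rw [Function.comp_apply, hfix k hk]]
      simp [e]
    rw [hu, hue, pr_eq_mul_mul_prod p a hne, pr_comp_swap p a hne]
    refine exchange_term_nonneg hij (prod_nonneg fun k _ => ?_)
    split_ifs <;> linarith [hp k]
  have hsum := sum_nonneg fun a (_ : a ∈ A) => hterm a
  simp only [sub_mul, mul_sub, sum_sub_distrib] at hsum
  linarith

theorem probFewOnes_le_of_forall_le (hp : ∀ i, 0 ≤ p i ∧ p i ≤ 1) {S T : Finset (Fin n)}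
    (hcard : #S = #T) (hT : ∀ j ∈ T, ∀ i ∉ T, p i ≤ p j) :
    probFewOnes p P m T ≤ probFewOnes p P m S := by
  induction hd : #(S \ T) using Nat.strong_induction_on generalizing S with
  | _ d ih =>
  rcases (S \ T).eq_empty_or_nonempty with hST | ⟨i, hi⟩
  · rw [eq_of_subset_of_card_le (sdiff_eq_empty_iff_subset.mp hST) hcard.ge]
  obtain ⟨j, hj⟩ : (T \ S).Nonempty := by
    rw [← card_pos, ← card_sdiff_comm hcard]
    exact card_pos.mpr ⟨i, hi⟩
  have hsdiff : S.map (Equiv.swap i j).toEmbedding \ T = (S \ T).erase i := by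
    rw [mem_sdiff] at hi hj
    ext x
    simp only [mem_sdiff, mem_map_equiv, Equiv.symm_swap, mem_erase]
    by_cases hxi : x = i
    · subst hxi; simp [hj.2]
    by_cases hxj : x = j
    · subst hxj; simp [hj.1]
    · simp [Equiv.swap_apply_of_ne_of_ne hxi hxj, hxi]
  rw [mem_sdiff] at hi hj
  calc probFewOnes p P m T ≤ probFewOnes p P m (S.map (Equiv.swap i j).toEmbedding) :=
        ih _ (by rw [← hd, hsdiff]; exact card_erase_lt_of_mem (mem_sdiff.mpr hi))
          (by rw [card_map, hcard]) rfl
    _ ≤ probFewOnes p P m S := probFewOnes_map_swap_le P m hp hi.1 hj.2 (hT j hj.1 i hi.2)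

end Exchange

theorem C1_eq_sum_probFewOnes {n : ℕ} (p : Fin n → ℝ) (αj βj : ℕ) (σ : Equiv.Perm (Fin n)) :
    C1 p αj βj σ = ∑ k ∈ range n, probFewOnes p (fun N => αj ≤ N ∧ N < βj) αj
      ((List.ofFn fun t => σ t).take k).toFinset := by
  set l := List.ofFn fun t => σ t
  have hl : l.Nodup := List.nodup_ofFn.mpr σ.injective
  have hluniv : l.toFinset = univ :=
    eq_univ_of_forall fun x => List.mem_toFinset.mpr (List.mem_ofFn.mpr ⟨σ.symm x, by simp⟩)
  unfold C1 probFewOnes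
  rw [sum_comm]
  refine sum_congr rfl fun a ha => ?_
  have hm : αj ≤ (l.filter a).length := by
    rw [hl.length_filter_eq_card, hluniv]
    exact (mem_filter.mp ha).2.1
  rw [stopCount_eq_card_filter_lt hm, List.length_ofFn, card_filter, Nat.cast_sum, sum_mul]
  refine sum_congr rfl fun k _ => ?_
  rw [(hl.sublist (List.take_sublist k l)).length_filter_eq_card]
  split_ifs <;> simp

theorem stmt0_general {n : ℕ} (p : Fin n → ℝ)
    (hp : ∀ i, 0 < p i ∧ p i < 1)
    (α : ℕ → ℕ)
    (j : ℕ)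
    (σ1 : Equiv.Perm (Fin n))
    (hσ1 : ∀ s t : Fin n, s ≤ t → p (σ1 t) ≤ p (σ1 s))
    (σ : Equiv.Perm (Fin n)) :
    C1 p (α j) (α (j + 1)) σ1 ≤ C1 p (α j) (α (j + 1)) σ := by
  have hp' : ∀ i, 0 ≤ p i ∧ p i ≤ 1 := fun i => ⟨(hp i).1.le, (hp i).2.le⟩
  have hsorted : (List.ofFn fun t => σ1 t).Pairwise fun x y => p y ≤ p x :=
    List.pairwise_ofFn.mpr fun s t hst => hσ1 s t hst.le
  have hcard (τ : Equiv.Perm (Fin n)) (k : ℕ) :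
      #((List.ofFn fun t => τ t).take k).toFinset = min k n := by
    rw [List.toFinset_card_of_nodup
      ((List.nodup_ofFn.mpr τ.injective).sublist (List.take_sublist _ _)),
      List.length_take, List.length_ofFn]
  rw [C1_eq_sum_probFewOnes, C1_eq_sum_probFewOnes]
  refine sum_le_sum fun k _ => probFewOnes_le_of_forall_le _ _ hp'
    (by rw [hcard, hcard]) fun x hx y hy => ?_
  rw [List.mem_toFinset] at hx hy
  exact hsorted.rel_of_mem_take_of_not_mem_take hx (List.mem_ofFn.mpr ⟨σ1.symm y, by simp⟩) hy

theorem stmt0 {n : ℕ} (hn : 1 ≤ n) (p : Fin n → ℝ)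
    (hp : ∀ i, 0 < p i ∧ p i < 1)
    (B : ℕ) (hB : 2 ≤ B) (α : ℕ → ℕ)
    (hα1 : α 1 = 0) (hαtop : α (B + 1) = n + 1)
    (hmono : ∀ j, 1 ≤ j → j ≤ B → α j < α (j + 1))
    (j : ℕ) (hj1 : 1 ≤ j) (hjB : j ≤ B)
    (σ1 : Equiv.Perm (Fin n))
    (hσ1 : ∀ s t : Fin n, s ≤ t → p (σ1 t) ≤ p (σ1 s))
    (σ : Equiv.Perm (Fin n)) :
    C1 p (α j) (α (j + 1)) σ1 ≤ C1 p (α j) (α (j + 1)) σ :=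
  stmt0_general p hp α j σ1 hσ1 σ
end

section
/- Assume unit costs. For every j ∈ {1,…,B} and every permutation σ of Fin n, C₀^j(σ⁰) ≤ C₀^j(σ); that is, among all permutations, a permutation listing the indices in nondecreasing order of p i minimizes the expected number of queries needed, on assignments of block M^j, until n − β_j + 1 false bits have been observed. -/
open Finset

/-- `C₀^j(σ)`: expected number of queries, over the block `{a | αj ≤ N₁(a) < βj}`,
until `n − βj + 1` zeros have been observed, querying in the order `σ(0), σ(1), …`. -/
noncomputable def C0 {n : ℕ} (p : Fin n → ℝ) (αj βj : ℕ) (σ : Equiv.Perm (Fin n)) : ℝ :=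
  ∑ a ∈ Finset.univ.filter (fun a : Fin n → Bool => αj ≤ N1 a ∧ N1 a < βj),
    (stopCount (fun i => !a i) (n + 1 - βj) (List.ofFn (fun t => σ t)) : ℝ) * pr p a

/-!
Exchange argument. Reindexing assignments by `σ`, `C₀^j(σ)` depends on `σ` only through the
tuple `q = p ∘ σ` of probabilities in query order. If `x < y` and `q y ≤ q x`, swapping the two
positions does not increase the cost: pairing each assignment `c` with `c ∘ swap x y`, twice the
decrease is `∑ (T c - T (c ∘ swap x y)) * (Pr c - Pr (c ∘ swap x y)) ≥ 0`, `T` being the stopping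
time. Among the cost-minimising orders, one maximising `∑ i * q i` must therefore be sorted, and
all sorted orders give the same tuple `q`, hence the same cost as `σ⁰`.
-/

section StoppingTime

variable {n : ℕ}

lemma mem_take_finRange_iff (k : ℕ) (i : Fin n) : i ∈ (List.finRange n).take k ↔ (i : ℕ) < k := by
  simp only [List.mem_take_iff_getElem, List.getElem_finRange, List.length_finRange,
    lt_min_iff]
  constructor
  · rintro ⟨j, ⟨hjk, -⟩, rfl⟩
    exact hjk
  · intro hik
    exact ⟨i, ⟨hik, i.isLt⟩, rfl⟩

lemma length_filter_take_finRange (sel : Fin n → Bool) (k : ℕ) :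
    (((List.finRange n).take k).filter sel).length = #{i : Fin n | (i : ℕ) < k ∧ sel i} := by
  rw [← List.toFinset_card_of_nodup
    (((List.nodup_finRange n).sublist (List.take_sublist _ _)).filter _)]
  congr 1
  ext i
  simp [mem_take_finRange_iff]

lemma length_filter_finRange (sel : Fin n → Bool) :
    ((List.finRange n).filter sel).length = #{i | sel i} := by
  rw [← List.toFinset_card_of_nodup ((List.nodup_finRange n).filter _)]
  congr 1
  ext i
  simp

lemma stopCount_map (sel : Fin n → Bool) (m : ℕ) (f : Fin n → Fin n) (l : List (Fin n)) :
    stopCount sel m (l.map f) = stopCount (fun i => sel (f i)) m l := by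
  simp only [stopCount, ← List.map_take, List.filter_map, List.length_map]
  rfl

lemma stopCount_le_stopCount {sel sel' : Fin n → Bool} {m : ℕ} {l l' : List (Fin n)}
    (hcount : ∀ k, ((l.take k).filter sel).length ≤ ((l'.take k).filter sel').length)
    (hm : m ≤ (l.filter sel).length) :
    stopCount sel' m l' ≤ stopCount sel m l := by
  have hne : {k | m ≤ ((l.take k).filter sel).length}.Nonempty :=
    ⟨l.length, by simpa only [Set.mem_ofPred_eq, List.take_length] using hm⟩
  exact Nat.sInf_le ((Nat.sInf_mem hne).trans (hcount _))

lemma card_prefix_le_card_prefix_swap (sel : Fin n → Bool) {x y : Fin n} (hxy : x < y)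
    (hx : sel x = false) (hy : sel y = true) (k : ℕ) :
    #{i : Fin n | (i : ℕ) < k ∧ sel i} ≤ #{i : Fin n | (i : ℕ) < k ∧ sel (Equiv.swap x y i)} := by
  rw [card_equiv (s := {i : Fin n | (i : ℕ) < k ∧ sel (Equiv.swap x y i)})
    (t := {i : Fin n | (Equiv.swap x y i : ℕ) < k ∧ sel i}) (Equiv.swap x y)
    (fun i => by simp)]
  refine card_le_card fun i hi => ?_
  simp only [mem_filter, mem_univ, true_and] at hi ⊢
  refine ⟨?_, hi.2⟩
  rcases eq_or_ne i y with rfl | hiy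
  · rw [Equiv.swap_apply_right]
    exact lt_trans hxy hi.1
  · have hix : i ≠ x := by rintro rfl; simp [hx] at hi
    rw [Equiv.swap_apply_of_ne_of_ne hix hiy]
    exact hi.1

lemma stopCount_swap_le (sel : Fin n → Bool) {m : ℕ} {x y : Fin n} (hxy : x < y)
    (hx : sel x = false) (hy : sel y = true) (hm : m ≤ #{i | sel i}) :
    stopCount (fun i => sel (Equiv.swap x y i)) m (List.finRange n)
      ≤ stopCount sel m (List.finRange n) := by
  refine stopCount_le_stopCount (fun k => ?_) ?_
  · simpa only [length_filter_take_finRange] using card_prefix_le_card_prefix_swap sel hxy hx hy k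
  · rwa [length_filter_finRange]

end StoppingTime

section Assignments

variable {n : ℕ}

lemma N1_comp_perm (c : Fin n → Bool) (σ : Equiv.Perm (Fin n)) :
    N1 (fun i => c (σ i)) = N1 c :=
  card_equiv σ (fun i => by simp)

lemma N1_add_card_false (c : Fin n → Bool) : N1 c + #{i | !c i} = n := by
  simpa [N1] using card_filter_add_card_filter_not (s := univ) (fun i => c i = true)

lemma comp_swap_eq_self {α : Type*} (c : Fin n → α) {x y : Fin n} (h : c x = c y) :
    (fun i => c (Equiv.swap x y i)) = c := by
  funext i
  rcases eq_or_ne i x with rfl | hix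
  · rw [Equiv.swap_apply_left, h]
  rcases eq_or_ne i y with rfl | hiy
  · rw [Equiv.swap_apply_right, h]
  rw [Equiv.swap_apply_of_ne_of_ne hix hiy]

lemma pr_comp_perm (q : Fin n → ℝ) (c : Fin n → Bool) (σ : Equiv.Perm (Fin n)) :
    pr (fun i => q (σ i)) (fun i => c (σ i)) = pr q c :=
  Equiv.prod_comp σ fun i => if c i then q i else 1 - q i

lemma pr_swap_le (q : Fin n → ℝ) (hq0 : ∀ i, 0 ≤ q i) (hq1 : ∀ i, q i ≤ 1)
    (c : Fin n → Bool) {x y : Fin n} (hxy : x ≠ y) (hq : q y ≤ q x)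
    (hx : c x = true) (hy : c y = false) :
    pr q (fun i => c (Equiv.swap x y i)) ≤ pr q c := by
  classical
  set R := ∏ i ∈ ({x, y} : Finset (Fin n))ᶜ, if c i then q i else 1 - q i
  have hswapR : ∏ i ∈ ({x, y} : Finset (Fin n))ᶜ,
      (if c (Equiv.swap x y i) then q i else 1 - q i) = R := by
    refine prod_congr rfl fun i hi => ?_
    simp only [mem_compl, mem_insert, mem_singleton, not_or] at hi
    rw [Equiv.swap_apply_of_ne_of_ne hi.1 hi.2]
  have hR : 0 ≤ R := prod_nonneg fun i _ => by split <;> linarith [hq0 i, hq1 i]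
  unfold pr
  rw [← prod_mul_prod_compl {x, y}, ← prod_mul_prod_compl {x, y}, hswapR, prod_pair hxy,
    prod_pair hxy]
  simp only [Equiv.swap_apply_left, Equiv.swap_apply_right, hx, hy, Bool.false_eq_true,
    if_true, if_false]
  exact mul_le_mul_of_nonneg_right (by linarith [mul_comm (q x) (q y)]) hR

end Assignments

lemma sum_mul_comp_involution_le {ι : Type*} {s : Finset ι} (g : ι → ι)
    (hg : ∀ a ∈ s, g a ∈ s) (hgg : ∀ a, g (g a) = a) (f h : ι → ℝ)
    (hfh : ∀ a ∈ s, 0 ≤ (f a - f (g a)) * (h a - h (g a))) :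
    ∑ a ∈ s, f a * h (g a) ≤ ∑ a ∈ s, f a * h a := by
  have hreindex (F : ι → ℝ) : ∑ a ∈ s, F (g a) = ∑ a ∈ s, F a :=
    sum_nbij' g g hg hg (fun a _ => hgg a) (fun a _ => hgg a) fun _ _ => rfl
  have hdiag := hreindex fun a => f a * h a
  have hcross := hreindex fun a => f a * h (g a)
  have hsum := sum_nonneg hfh
  simp only [hgg, mul_sub, sub_mul, sum_sub_distrib] at hdiag hcross hsum
  linarith

section Cost

variable {n : ℕ}

lemma C0_eq_C0_one (p : Fin n → ℝ) (αj βj : ℕ) (σ : Equiv.Perm (Fin n)) :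
    C0 p αj βj σ = C0 (fun i => p (σ i)) αj βj 1 := by
  unfold C0
  simp only [List.ofFn_eq_map, stopCount_map, Equiv.Perm.coe_one, id_eq]
  refine sum_nbij' (fun a i => a (σ i)) (fun c i => c (σ.symm i)) ?_ ?_ ?_ ?_ ?_
  · intro a ha
    simpa only [mem_filter, mem_univ, true_and, N1_comp_perm] using ha
  · intro c hc
    simpa only [mem_filter, mem_univ, true_and, N1_comp_perm] using hc
  · intro a _
    simp
  · intro c _
    simp
  · intro a _
    rw [pr_comp_perm]

/-- Both factors have the sign of `c x - c y`: putting a zero earlier stops the count of zeros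
no later, and putting the larger probability on a one makes the assignment no less likely. -/
lemma stopCount_sub_mul_pr_sub_nonneg (q : Fin n → ℝ) (hq0 : ∀ i, 0 ≤ q i) (hq1 : ∀ i, q i ≤ 1)
    {m : ℕ} (c : Fin n → Bool) {x y : Fin n} (hxy : x < y) (hq : q y ≤ q x)
    (hm : m + N1 c ≤ n) :
    0 ≤ ((stopCount (fun i => !c i) m (List.finRange n) : ℝ)
        - stopCount (fun i => !c (Equiv.swap x y i)) m (List.finRange n))
      * (pr q c - pr q (fun i => c (Equiv.swap x y i))) := by
  have key : ∀ d : Fin n → Bool, d x = true → d y = false → m + N1 d ≤ n →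
      stopCount (fun i => !d (Equiv.swap x y i)) m (List.finRange n)
          ≤ stopCount (fun i => !d i) m (List.finRange n)
        ∧ pr q (fun i => d (Equiv.swap x y i)) ≤ pr q d := fun d hx hy hm =>
    ⟨stopCount_swap_le (fun i => !d i) hxy (by simp [hx]) (by simp [hy])
        (by linarith [N1_add_card_false d]),
      pr_swap_le q hq0 hq1 d hxy.ne hq hx hy⟩
  cases hx : c x <;> cases hy : c y
  · simp [comp_swap_eq_self c (hx.trans hy.symm)]
  · obtain ⟨hstop, hpr⟩ := key (fun i => c (Equiv.swap x y i)) (by simpa) (by simpa)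
      (by rwa [N1_comp_perm])
    simp only [Equiv.swap_apply_self] at hstop hpr
    exact mul_nonneg_of_nonpos_of_nonpos (sub_nonpos.2 (by exact_mod_cast hstop))
      (sub_nonpos.2 hpr)
  · obtain ⟨hstop, hpr⟩ := key c hx hy hm
    exact mul_nonneg (sub_nonneg.2 (by exact_mod_cast hstop)) (sub_nonneg.2 hpr)
  · simp [comp_swap_eq_self c (hx.trans hy.symm)]

lemma C0_one_swap_le (q : Fin n → ℝ) (hq0 : ∀ i, 0 ≤ q i) (hq1 : ∀ i, q i ≤ 1) (αj βj : ℕ)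
    {x y : Fin n} (hxy : x < y) (hq : q y ≤ q x) :
    C0 (fun i => q (Equiv.swap x y i)) αj βj 1 ≤ C0 q αj βj 1 := by
  have hpr (c : Fin n → Bool) :
      pr (fun i => q (Equiv.swap x y i)) c = pr q (fun i => c (Equiv.swap x y i)) := by
    simpa using pr_comp_perm q (fun i => c (Equiv.swap x y i)) (Equiv.swap x y)
  unfold C0
  simp only [List.ofFn_eq_map, stopCount_map, Equiv.Perm.coe_one, id_eq, hpr]
  refine sum_mul_comp_involution_le (fun (c : Fin n → Bool) i => c (Equiv.swap x y i))
    (fun c hc => ?_) (fun c => by simp) _ _ (fun c hc => ?_)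
  · simpa only [mem_filter, mem_univ, true_and, N1_comp_perm] using hc
  · simp only [mem_filter, mem_univ, true_and] at hc
    have := N1_add_card_false c
    exact stopCount_sub_mul_pr_sub_nonneg q hq0 hq1 c hxy hq (by omega)

end Cost

lemma Finite.exists_min_max_tiebreak {α β γ : Type*} [Finite α] [Nonempty α] [LinearOrder β]
    [LinearOrder γ] (f : α → β) (g : α → γ) :
    ∃ a, (∀ b, f a ≤ f b) ∧ ∀ b, f b ≤ f a → g b ≤ g a := by
  classical
  have := Fintype.ofFinite α
  obtain ⟨a₀, ha₀⟩ := Finite.exists_min f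
  obtain ⟨a, ha, hmax⟩ := exists_max_image {b | f b ≤ f a₀} g ⟨a₀, by simp⟩
  simp only [mem_filter, mem_univ, true_and] at ha hmax
  exact ⟨a, fun b => ha.trans (ha₀ b), fun b hb => hmax b (hb.trans ha)⟩

noncomputable def weightedIndexSum {n : ℕ} (q : Fin n → ℝ) : ℝ :=
  ∑ i : Fin n, (i : ℝ) * q i

lemma weightedIndexSum_lt_swap {n : ℕ} (q : Fin n → ℝ) {x y : Fin n} (hxy : x < y)
    (hq : q y < q x) :
    weightedIndexSum q < weightedIndexSum fun i => q (Equiv.swap x y i) := by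
  have hcomp : weightedIndexSum (fun i => q (Equiv.swap x y i))
      = ∑ i, (Equiv.swap x y i : ℝ) * q i := by
    simpa [weightedIndexSum] using
      Equiv.sum_comp (Equiv.swap x y) fun i => (Equiv.swap x y i : ℝ) * q i
  have hdiff : ∑ i, ((Equiv.swap x y i : ℝ) - i) * q i = ((y : ℝ) - x) * (q x - q y) := by
    rw [Fintype.sum_eq_add x y hxy.ne fun i hi => by
      rw [Equiv.swap_apply_of_ne_of_ne hi.1 hi.2, sub_self, zero_mul]]
    simp only [Equiv.swap_apply_left, Equiv.swap_apply_right]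
    ring
  have hpos : 0 < ((y : ℝ) - x) * (q x - q y) :=
    mul_pos (sub_pos.2 (by exact_mod_cast hxy)) (sub_pos.2 hq)
  simp only [sub_mul, sum_sub_distrib] at hdiff
  rw [hcomp, weightedIndexSum]
  linarith

theorem stmt1_general {n : ℕ} (p : Fin n → ℝ)
    (hp : ∀ i, 0 < p i ∧ p i < 1)
    (α : ℕ → ℕ)
    (j : ℕ)
    (σ0 : Equiv.Perm (Fin n))
    (hσ0 : ∀ s t : Fin n, s ≤ t → p (σ0 s) ≤ p (σ0 t))
    (σ : Equiv.Perm (Fin n)) :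
    C0 p (α j) (α (j + 1)) σ0 ≤ C0 p (α j) (α (j + 1)) σ := by
  obtain ⟨τ, hτmin, hτmax⟩ := Finite.exists_min_max_tiebreak (C0 p (α j) (α (j + 1)))
    fun τ => weightedIndexSum fun i => p (τ i)
  have hτ : Monotone fun i => p (τ i) := by
    intro x y hle
    by_contra! hlt
    have hxy : x < y := hle.lt_of_ne (by rintro rfl; exact hlt.false)
    have hswap : C0 p (α j) (α (j + 1)) (τ * Equiv.swap x y) ≤ C0 p (α j) (α (j + 1)) τ := by
      rw [C0_eq_C0_one, C0_eq_C0_one p _ _ τ]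
      exact C0_one_swap_le _ (fun i => (hp _).1.le) (fun i => (hp _).2.le) _ _ hxy hlt.le
    exact (weightedIndexSum_lt_swap (fun i => p (τ i)) hxy hlt).not_ge (hτmax _ hswap)
  have hsorted : (fun i => p (σ0 i)) = fun i => p (τ i) :=
    Tuple.unique_monotone (f := p) hσ0 hτ
  calc C0 p (α j) (α (j + 1)) σ0 = C0 p (α j) (α (j + 1)) τ := by
        rw [C0_eq_C0_one, hsorted, ← C0_eq_C0_one]
    _ ≤ C0 p (α j) (α (j + 1)) σ := hτmin σ

theorem stmt1 {n : ℕ} (hn : 1 ≤ n) (p : Fin n → ℝ)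
    (hp : ∀ i, 0 < p i ∧ p i < 1)
    (B : ℕ) (hB : 2 ≤ B) (α : ℕ → ℕ)
    (hα1 : α 1 = 0) (hαtop : α (B + 1) = n + 1)
    (hmono : ∀ j, 1 ≤ j → j ≤ B → α j < α (j + 1))
    (j : ℕ) (hj1 : 1 ≤ j) (hjB : j ≤ B)
    (σ0 : Equiv.Perm (Fin n))
    (hσ0 : ∀ s t : Fin n, s ≤ t → p (σ0 s) ≤ p (σ0 t))
    (σ : Equiv.Perm (Fin n)) :
    C0 p (α j) (α (j + 1)) σ0 ≤ C0 p (α j) (α (j + 1)) σ :=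
  stmt1_general p hp α j σ0 hσ0 σ
end

section
/- Assume unit costs. For every j ∈ {1,…,B} and every full decision tree T over n bits: Σ_{a∈M^j} c₁^j(σ¹,a)·Pr(a) ≤ Σ_{a∈M^j} c₁^j(T,a)·Pr(a), and Σ_{a∈M^j} c₀^j(σ⁰,a)·Pr(a) ≤ Σ_{a∈M^j} c₀^j(T,a)·Pr(a). That is, the fixed permutations σ¹ and σ⁰ are optimal even among all adaptive query orders for observing α_j true bits (respectively n − β_j + 1 false bits) on block M^j. -/
/-!
Negating every bit exchanges zeros and ones, replaces `p` by `1 - p` and mirrors the tree, so the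
second inequality is the first one for the complementary probabilities.

For the first, condition on the answer to the first query. The expected cost on the block
`[L, U)` of waiting for `m ≤ L` ones then satisfies a first-step recursion in which the cost of the
first query is the probability of the block, and only the probabilities of the bits not yet
queried enter the rest. For a fixed order this recursion is `seqCost`; exchanging two adjacent
queries changes it only when a single one is still missing, and then putting the likelier bit first
helps, so the nonincreasing order is the best fixed order. An induction on the tree, using this at
every node, bounds the cost of any full decision tree below by that of the sorted order on the
remaining bits.
-/

open Finset

/-- Binary decision trees over `n` bits, with natural-number leaf labels. -/
inductive DTree (n : ℕ) : Type where
  | leaf : ℕ → DTree n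
  | node : Fin n → DTree n → DTree n → DTree n

namespace DTree

/-- Output of the tree on assignment `a`. -/
def eval {n : ℕ} : DTree n → (Fin n → Bool) → ℕ
  | .leaf v, _ => v
  | .node i t0 t1, a => if a i then eval t1 a else eval t0 a

/-- Total cost of the queries made on assignment `a`. -/
noncomputable def cost {n : ℕ} (c : Fin n → ℝ) : DTree n → (Fin n → Bool) → ℝ
  | .leaf _, _ => 0
  | .node i t0 t1, a => c i + (if a i then cost c t1 a else cost c t0 a)

/-- The list of indices queried on assignment `a`, in order. -/
def path {n : ℕ} : DTree n → (Fin n → Bool) → List (Fin n)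
  | .leaf _, _ => []
  | .node i t0 t1, a => i :: (if a i then path t1 a else path t0 a)

/-- No index occurs twice on any root-to-leaf path (given already-used indices). -/
def Proper {n : ℕ} : DTree n → Finset (Fin n) → Prop
  | .leaf _, _ => True
  | .node i t0 t1, used =>
      i ∉ used ∧ Proper t0 (insert i used) ∧ Proper t1 (insert i used)

/-- Every root-to-leaf path queries all `n` indices (and no repeats). -/
def Full {n : ℕ} : DTree n → Finset (Fin n) → Prop
  | .leaf _, used => used = Finset.univ
  | .node i t0 t1, used =>
      i ∉ used ∧ Full t0 (insert i used) ∧ Full t1 (insert i used)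

end DTree

open Function List

/-- `blockMass q L U` is the probability that independent bits with success probabilities `q`
contain at least `L` and fewer than `U` ones. -/
noncomputable def blockMass : List ℝ → ℕ → ℕ → ℝ
  | [], L, U => if L = 0 ∧ 0 < U then 1 else 0
  | q :: l, L, U => q * blockMass l (L - 1) (U - 1) + (1 - q) * blockMass l L U

/-- Expected number of queries, restricted to the event that the number of ones lies in `[L, U)`,
when independent bits with success probabilities `q` are queried in list order until `m` ones
have been seen (first-step analysis: the first query is paid for on the whole block). -/
noncomputable def seqCost : List ℝ → ℕ → ℕ → ℕ → ℝ
  | _, 0, _, _ => 0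
  | [], _ + 1, _, _ => 0
  | q :: l, m + 1, L, U =>
      blockMass (q :: l) L U + q * seqCost l m (L - 1) (U - 1) + (1 - q) * seqCost l (m + 1) L U

section seqCost

variable {l l₁ l₂ : List ℝ}

@[simp] lemma seqCost_zero (l : List ℝ) (L U : ℕ) : seqCost l 0 L U = 0 := by cases l <;> rfl

@[simp] lemma seqCost_nil (m L U : ℕ) : seqCost [] m L U = 0 := by cases m <;> rfl

lemma blockMass_nonneg (hl : ∀ q ∈ l, 0 ≤ q ∧ q ≤ 1) (L U : ℕ) : 0 ≤ blockMass l L U := by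
  induction l generalizing L U with
  | nil => unfold blockMass; split_ifs <;> norm_num
  | cons q l ih =>
    obtain ⟨hq₀, hq₁⟩ := hl q mem_cons_self
    have ih' := ih (fun x hx => hl x (mem_cons_of_mem q hx))
    have := ih' (L - 1) (U - 1)
    have := ih' L U
    unfold blockMass
    nlinarith

lemma blockMass_perm (h : l₁ ~ l₂) (L U : ℕ) : blockMass l₁ L U = blockMass l₂ L U := by
  induction h generalizing L U with
  | nil => rfl
  | cons x _ ih => simp only [blockMass, ih]
  | swap x y l => simp only [blockMass]; ring
  | trans _ _ ih₁ ih₂ => rw [ih₁, ih₂]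

/-- Exchanging the first two queries only matters when one more one is needed; then the likelier
bit should come first. -/
lemma seqCost_swap_le {x y : ℝ} (hxy : x ≤ y) (hv : ∀ q ∈ l, 0 ≤ q ∧ q ≤ 1) (m L U : ℕ) :
    seqCost (y :: x :: l) m L U ≤ seqCost (x :: y :: l) m L U := by
  match m with
  | 0 => simp
  | 1 =>
    simp only [seqCost, seqCost_zero, blockMass]
    nlinarith [mul_nonneg (sub_nonneg.2 hxy) (blockMass_nonneg hv (L - 1) (U - 1))]
  | m + 2 =>
    apply le_of_eq
    simp only [seqCost, blockMass]
    ring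

lemma seqCost_cons_le_cons {q : ℝ} (hq : 0 ≤ q ∧ q ≤ 1) (hperm : l₁ ~ l₂)
    (h : ∀ m L U, seqCost l₁ m L U ≤ seqCost l₂ m L U) (m L U : ℕ) :
    seqCost (q :: l₁) m L U ≤ seqCost (q :: l₂) m L U := by
  match m with
  | 0 => simp
  | m + 1 =>
    have := h m (L - 1) (U - 1)
    have := h (m + 1) L U
    rw [seqCost, seqCost, blockMass_perm (hperm.cons q)]
    nlinarith

lemma seqCost_orderedInsert_le {x : ℝ} (hl : ∀ q ∈ l, 0 ≤ q ∧ q ≤ 1)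
    (hs : l.Pairwise (· ≥ ·)) (m L U : ℕ) :
    seqCost (l.orderedInsert (· ≥ ·) x) m L U ≤ seqCost (x :: l) m L U := by
  induction l generalizing m L U with
  | nil => rfl
  | cons y l ih =>
    by_cases hxy : x ≥ y
    · simp [orderedInsert, hxy]
    · have hl' : ∀ q ∈ l, 0 ≤ q ∧ q ≤ 1 := fun q hq => hl q (mem_cons_of_mem y hq)
      rw [orderedInsert, if_neg hxy]
      calc seqCost (y :: l.orderedInsert (· ≥ ·) x) m L U
          ≤ seqCost (y :: x :: l) m L U :=
            seqCost_cons_le_cons (hl y mem_cons_self) (perm_orderedInsert _ x l)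
              (ih hl' hs.of_cons) m L U
        _ ≤ seqCost (x :: y :: l) m L U := seqCost_swap_le (le_of_not_ge hxy) hl' m L U

lemma seqCost_insertionSort_le (hl : ∀ q ∈ l, 0 ≤ q ∧ q ≤ 1) (m L U : ℕ) :
    seqCost (l.insertionSort (· ≥ ·)) m L U ≤ seqCost l m L U := by
  induction l generalizing m L U with
  | nil => rfl
  | cons x l ih =>
    have hl' : ∀ q ∈ l, 0 ≤ q ∧ q ≤ 1 := fun q hq => hl q (mem_cons_of_mem x hq)
    rw [insertionSort_cons]
    calc seqCost ((l.insertionSort (· ≥ ·)).orderedInsert (· ≥ ·) x) m L U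
        ≤ seqCost (x :: l.insertionSort (· ≥ ·)) m L U :=
          seqCost_orderedInsert_le
            (fun q hq => hl' q ((perm_insertionSort _ l).mem_iff.1 hq))
            (pairwise_insertionSort _ l) m L U
      _ ≤ seqCost (x :: l) m L U :=
          seqCost_cons_le_cons (hl x mem_cons_self) (perm_insertionSort _ l) (ih hl') m L U

lemma seqCost_le_of_perm (hl : ∀ q ∈ l₂, 0 ≤ q ∧ q ≤ 1) (hs : l₁.Pairwise (· ≥ ·))
    (hperm : l₁ ~ l₂) (m L U : ℕ) : seqCost l₁ m L U ≤ seqCost l₂ m L U := by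
  rw [hperm.trans (perm_insertionSort _ l₂).symm |>.eq_of_pairwise' hs (pairwise_insertionSort _ l₂)]
  exact seqCost_insertionSort_le hl m L U

end seqCost

section Probability

variable {n : ℕ}

lemma sum_pr (p : Fin n → ℝ) : ∑ a, pr p a = 1 := by
  simp only [pr, ← Fintype.piFinset_univ,
    ← Finset.prod_univ_sum (fun _ : Fin n => (univ : Finset Bool))
      (fun i b => if b then p i else 1 - p i), Fintype.sum_bool]
  simp

lemma pr_not (p : Fin n → ℝ) (a : Fin n → Bool) :
    pr p (fun i => !a i) = pr (fun i => 1 - p i) a :=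
  Finset.prod_congr rfl fun i _ => by cases h : a i <;> simp [h]

lemma sum_mul_pr_eq_sum_insertNth {k : ℕ} (p : Fin (k + 1) → ℝ) (i : Fin (k + 1))
    (F : (Fin (k + 1) → Bool) → ℝ) :
    ∑ a, F a * pr p a =
      ∑ r : Fin k → Bool, (F (i.insertNth true r) * p i + F (i.insertNth false r) * (1 - p i)) *
        pr (p ∘ i.succAbove) r := by
  rw [← (Fin.insertNthEquiv (fun _ => Bool) i).sum_comp, Fintype.sum_prod_type_right]
  refine Finset.sum_congr rfl fun r _ => ?_
  simp only [Fintype.sum_bool, Fin.insertNthEquiv, Equiv.coe_fn_mk, pr, Fin.prod_univ_succAbove _ i,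
    Fin.insertNth_apply_same, Fin.insertNth_apply_succAbove, comp_apply]
  simp only [if_true, Bool.false_eq_true, if_false]
  ring

lemma sum_ite_mul_pr (p : Fin n → ℝ) (i : Fin n) {g₀ g₁ : (Fin n → Bool) → ℝ}
    (h₀ : ∀ a c, g₀ (update a i c) = g₀ a) (h₁ : ∀ a c, g₁ (update a i c) = g₁ a) :
    ∑ a, (if a i then g₁ a else g₀ a) * pr p a =
      p i * ∑ a, g₁ a * pr p a + (1 - p i) * ∑ a, g₀ a * pr p a := by
  obtain ⟨k, rfl⟩ : ∃ k, n = k + 1 := ⟨n - 1, by have := i.pos; omega⟩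
  have flip : ∀ g : (Fin (k + 1) → Bool) → ℝ, (∀ a c, g (update a i c) = g a) →
      ∀ r b, g (i.insertNth b r) = g (i.insertNth (!b) r) := by
    intro g hg r b
    rw [← hg (i.insertNth (!b) r) b, Fin.update_insertNth]
  rw [sum_mul_pr_eq_sum_insertNth p i, sum_mul_pr_eq_sum_insertNth p i,
    sum_mul_pr_eq_sum_insertNth p i, Finset.mul_sum, Finset.mul_sum, ← Finset.sum_add_distrib]
  refine Finset.sum_congr rfl fun r _ => ?_
  rw [flip g₁ h₁ r false, flip g₀ h₀ r true]
  simp only [Fin.insertNth_apply_same, Bool.not_false, Bool.not_true, if_true, Bool.false_eq_true,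
    if_false]
  ring

end Probability

section StopCount

variable {n : ℕ} {sel sel' : Fin n → Bool} {m : ℕ} {i : Fin n} {l : List (Fin n)}

@[simp] lemma stopCount_zero (sel : Fin n → Bool) (l : List (Fin n)) : stopCount sel 0 l = 0 :=
  Nat.sInf_eq_zero.2 (Or.inl (Nat.zero_le _))

@[simp] lemma stopCount_nil (sel : Fin n → Bool) (m : ℕ) : stopCount sel m [] = 0 := by
  rcases Nat.eq_zero_or_pos m with rfl | hm
  · exact stopCount_zero sel []
  · exact Nat.sInf_eq_zero.2 (Or.inr (by ext k; simp; omega))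

lemma stopCount_cons (hm : m + 1 ≤ (i :: l).countP sel) :
    stopCount sel (m + 1) (i :: l) = stopCount sel (if sel i then m else m + 1) l + 1 := by
  have hpos : 1 ≤ stopCount sel (m + 1) (i :: l) := by
    refine le_csInf ⟨(i :: l).length, ?_⟩ fun k hk => Nat.one_le_iff_ne_zero.2 ?_
    · simpa [← countP_eq_length_filter] using hm
    · rintro rfl
      simp at hk
  rw [stopCount, ← Nat.sInf_add hpos]
  congr 2
  ext k
  simp only [Set.mem_ofPred_eq, take_succ_cons, List.filter_cons]
  split_ifs <;> simp

lemma stopCount_congr (h : ∀ x ∈ l, sel x = sel' x) : stopCount sel m l = stopCount sel' m l := by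
  unfold stopCount
  simp only [filter_congr fun x hx => h x (take_subset _ l hx)]

end StopCount

section Strategy

variable {n : ℕ} (p : Fin n → ℝ)

/-- A (possibly adaptive) query strategy is modelled by the sequence `P a` of indices it queries
on assignment `a`. -/
noncomputable def blockProb (P : (Fin n → Bool) → List (Fin n)) (L U : ℕ) : ℝ :=
  ∑ a, (if L ≤ (P a).countP a ∧ (P a).countP a < U then 1 else 0) * pr p a

noncomputable def blockCost (P : (Fin n → Bool) → List (Fin n)) (m L U : ℕ) : ℝ :=
  ∑ a, (if L ≤ (P a).countP a ∧ (P a).countP a < U then (stopCount a m (P a) : ℝ) else 0) *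
    pr p a

def Avoids (P : (Fin n → Bool) → List (Fin n)) (i : Fin n) : Prop :=
  ∀ a, i ∉ P a ∧ ∀ c, P (update a i c) = P a

variable {p} {P P₀ P₁ : (Fin n → Bool) → List (Fin n)} {i : Fin n} {l : List (Fin n)}
  {m L U : ℕ}

lemma Avoids.countP_update (h : Avoids P i) (a : Fin n → Bool) (c : Bool) :
    (P (update a i c)).countP (update a i c) = (P a).countP a := by
  rw [(h a).2 c]
  exact countP_congr fun x hx => by rw [update_of_ne (ne_of_mem_of_not_mem hx (h a).1)]

lemma Avoids.stopCount_update (h : Avoids P i) (a : Fin n → Bool) (c : Bool) :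
    stopCount (update a i c) m (P (update a i c)) = stopCount a m (P a) := by
  rw [(h a).2 c]
  exact stopCount_congr fun x hx => update_of_ne (ne_of_mem_of_not_mem hx (h a).1) c a

lemma avoids_const (hi : i ∉ l) : Avoids (fun _ => l) i := fun _ => ⟨hi, fun _ => rfl⟩

@[simp] lemma blockCost_zero (P : (Fin n → Bool) → List (Fin n)) (L U : ℕ) :
    blockCost p P 0 L U = 0 := by
  simp [blockCost]

lemma blockProb_cons (h₀ : Avoids P₀ i) (h₁ : Avoids P₁ i) (L U : ℕ) :
    blockProb p (fun a => i :: if a i then P₁ a else P₀ a) L U =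
      p i * blockProb p P₁ (L - 1) (U - 1) + (1 - p i) * blockProb p P₀ L U := by
  unfold blockProb
  rw [← sum_ite_mul_pr p i (fun a c => by rw [h₀.countP_update])
    (fun a c => by rw [h₁.countP_update])]
  refine Finset.sum_congr rfl fun a _ => ?_
  cases hai : a i
  · simp only [hai, countP_cons, Bool.false_eq_true, if_false, add_zero]
  · have : ∀ c, L ≤ c + 1 ∧ c + 1 < U ↔ L - 1 ≤ c ∧ c < U - 1 := fun c => by omega
    simp only [hai, countP_cons, if_true, this]

lemma blockCost_cons (h₀ : Avoids P₀ i) (h₁ : Avoids P₁ i) (hm : m + 1 ≤ L) :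
    blockCost p (fun a => i :: if a i then P₁ a else P₀ a) (m + 1) L U =
      blockProb p (fun a => i :: if a i then P₁ a else P₀ a) L U +
        (p i * blockCost p P₁ m (L - 1) (U - 1) + (1 - p i) * blockCost p P₀ (m + 1) L U) := by
  unfold blockCost blockProb
  rw [← sum_ite_mul_pr p i (fun a c => by rw [h₀.countP_update, h₀.stopCount_update])
    (fun a c => by rw [h₁.countP_update, h₁.stopCount_update]), ← Finset.sum_add_distrib]
  refine Finset.sum_congr rfl fun a _ => ?_
  rw [← add_mul]
  congr 1
  cases hai : a i
  · simp only [hai, countP_cons, Bool.false_eq_true, if_false, add_zero]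
    split_ifs with hblock
    · rw [stopCount_cons (by simp [hai]; omega), hai]
      push_cast; ring
    · simp
  · have : ∀ c, L ≤ c + 1 ∧ c + 1 < U ↔ L - 1 ≤ c ∧ c < U - 1 := fun c => by omega
    simp only [hai, countP_cons, if_true, this]
    split_ifs with hblock
    · rw [stopCount_cons (by simp [hai]; omega), hai, if_pos rfl]
      push_cast; ring
    · simp

lemma blockProb_perm (hP : ∀ a, P a ~ l) (L U : ℕ) :
    blockProb p P L U = blockProb p (fun _ => l) L U :=
  Finset.sum_congr rfl fun a _ => by rw [(hP a).countP_eq]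

lemma blockProb_const (hl : l.Nodup) (L U : ℕ) :
    blockProb p (fun _ => l) L U = blockMass (l.map p) L U := by
  induction l generalizing L U with
  | nil => simp [blockProb, blockMass, sum_pr]
  | cons i l ih =>
    obtain ⟨hi, hl⟩ := nodup_cons.1 hl
    have hcons : (fun _ => i :: l) = fun a : Fin n → Bool => i :: if a i then l else l := by simp
    rw [hcons, blockProb_cons (avoids_const hi) (avoids_const hi), ih hl, ih hl]
    rfl

lemma blockCost_const (hl : l.Nodup) (hm : m ≤ L) :
    blockCost p (fun _ => l) m L U = seqCost (l.map p) m L U := by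
  induction l generalizing m L U with
  | nil => simp [blockCost]
  | cons i l ih =>
    obtain ⟨hi, hl⟩ := nodup_cons.1 hl
    cases m with
    | zero => simp
    | succ m =>
      have hcons : (fun _ => i :: l) = fun a : Fin n → Bool => i :: if a i then l else l := by simp
      rw [hcons, blockCost_cons (avoids_const hi) (avoids_const hi) hm, ← hcons,
        blockProb_const (hl.cons hi), ih hl (by omega), ih hl hm, List.map_cons, seqCost]
      ring

end Strategy

lemma Finset.toList_compl_perm {α : Type*} [Fintype α] [DecidableEq α] {s : Finset α} {i : α}
    (hi : i ∉ s) :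
    sᶜ.toList ~ i :: (insert i s)ᶜ.toList := by
  rw [compl_insert]
  conv_lhs => rw [← insert_erase (mem_compl.2 hi)]
  exact toList_insert (notMem_erase i _)

namespace DTree

variable {n : ℕ} {T : DTree n} {s : Finset (Fin n)} {i : Fin n}

lemma path_update_of_notMem {a : Fin n → Bool} (h : i ∉ T.path a) (c : Bool) :
    T.path (update a i c) = T.path a := by
  induction T with
  | leaf => rfl
  | node j t₀ t₁ ih₀ ih₁ =>
    simp only [path, List.mem_cons, not_or] at h ⊢
    rw [update_of_ne (Ne.symm h.1)]
    cases hj : a j <;> simp only [hj, if_true, Bool.false_eq_true, if_false] at h ⊢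
    · rw [ih₀ h.2]
    · rw [ih₁ h.2]

lemma Full.path_perm (h : T.Full s) (a : Fin n → Bool) : T.path a ~ sᶜ.toList := by
  induction T generalizing s with
  | leaf => rw [show s = univ from h]; simp [path]
  | node i t₀ t₁ ih₀ ih₁ =>
    obtain ⟨hi, h₀, h₁⟩ := h
    refine Perm.trans ?_ (Finset.toList_compl_perm hi).symm
    simp only [path]
    split_ifs
    · exact (ih₁ h₁).cons i
    · exact (ih₀ h₀).cons i

lemma Full.avoids (h : T.Full (insert i s)) : Avoids T.path i := fun a =>
  have hi : i ∉ T.path a := by simp [(h.path_perm a).mem_iff]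
  ⟨hi, path_update_of_notMem hi⟩

lemma Full.blockProb_eq {p : Fin n → ℝ} (h : T.Full s) (L U : ℕ) :
    blockProb p T.path L U = blockMass (sᶜ.toList.map p) L U := by
  rw [blockProb_perm h.path_perm, blockProb_const (nodup_toList _)]

lemma Full.seqCost_le_blockCost {p : Fin n → ℝ} (hp : ∀ i, 0 ≤ p i ∧ p i ≤ 1) (h : T.Full s)
    {w : List ℝ} (hw : w.Pairwise (· ≥ ·)) (hwp : w ~ sᶜ.toList.map p) {m L U : ℕ}
    (hm : m ≤ L) : seqCost w m L U ≤ blockCost p T.path m L U := by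
  induction T generalizing s w m L U with
  | leaf =>
    rw [show s = univ from h] at hwp
    simp_all [blockCost, path]
  | node i t₀ t₁ ih₀ ih₁ =>
    obtain ⟨hi, h₀, h₁⟩ := id h
    cases m with
    | zero => simp
    | succ m =>
      set w' := ((insert i s)ᶜ.toList.map p).insertionSort (· ≥ ·)
      have hw' : w' ~ (insert i s)ᶜ.toList.map p := perm_insertionSort _ _
      have hperm : w ~ p i :: w' :=
        hwp.trans (((Finset.toList_compl_perm hi).map p).trans (hw'.symm.cons (p i)))
      have hprob : blockMass (p i :: w') L U = blockProb p (node i t₀ t₁).path L U := by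
        rw [h.blockProb_eq, blockMass_perm (hperm.symm.trans hwp)]
      have hbound : ∀ q ∈ p i :: w', 0 ≤ q ∧ q ≤ 1 := fun q hq => by
        obtain ⟨x, -, rfl⟩ := List.mem_map.1 ((hperm.symm.trans hwp).mem_iff.1 hq)
        exact hp x
      calc seqCost w (m + 1) L U
          ≤ seqCost (p i :: w') (m + 1) L U :=
            seqCost_le_of_perm hbound hw hperm _ _ _
        _ ≤ blockProb p (node i t₀ t₁).path L U +
              (p i * blockCost p t₁.path m (L - 1) (U - 1) +
                (1 - p i) * blockCost p t₀.path (m + 1) L U) := by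
            rw [seqCost, hprob, add_assoc]
            gcongr
            · linarith [hp i]
            · exact ih₁ h₁ (pairwise_insertionSort _ _) hw' (by omega)
            · linarith [hp i]
            · exact ih₀ h₀ (pairwise_insertionSort _ _) hw' hm
        _ = blockCost p (node i t₀ t₁).path (m + 1) L U :=
            (blockCost_cons h₀.avoids h₁.avoids hm).symm

end DTree

section Counting

variable {n : ℕ}

lemma countP_eq_N1 {l : List (Fin n)} (hl : l ~ univ.toList) (a : Fin n → Bool) :
    l.countP a = N1 a := by
  rw [hl.countP_eq, N1, Finset.card_def, Finset.filter_val, ← Multiset.countP_eq_card_filter,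
    ← Finset.coe_toList, Multiset.coe_countP]
  simp

lemma N1_add_N1_not (a : Fin n → Bool) : N1 a + N1 (fun i => !a i) = n := by
  simpa [N1] using Finset.card_filter_add_card_filter_not (s := univ) fun i => a i = true

lemma sum_filter_N1_eq_blockCost (p : Fin n → ℝ) {P : (Fin n → Bool) → List (Fin n)}
    (hP : ∀ a, P a ~ univ.toList) (m L U : ℕ) :
    ∑ a ∈ univ.filter (fun a => L ≤ N1 a ∧ N1 a < U), (stopCount a m (P a) : ℝ) * pr p a =
      blockCost p P m L U := by
  rw [Finset.sum_filter]
  exact Finset.sum_congr rfl fun a _ => by simp only [countP_eq_N1 (hP a), ite_mul, zero_mul]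

lemma sum_filter_N1_not (p : Fin n → ℝ) (P : (Fin n → Bool) → List (Fin n)) (m L U : ℕ) :
    ∑ a ∈ univ.filter (fun a => L ≤ N1 a ∧ N1 a < U),
        (stopCount (fun i => !a i) m (P a) : ℝ) * pr p a =
      ∑ b ∈ univ.filter (fun b => n + 1 - U ≤ N1 b ∧ N1 b < n + 1 - L),
        (stopCount b m (P fun i => !b i) : ℝ) * pr (fun i => 1 - p i) b := by
  rw [Finset.sum_filter, Finset.sum_filter]
  refine Fintype.sum_bijective (fun a i => !a i)
    (Function.Involutive.bijective fun a => by simp) _ _ fun a => ?_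
  have hN1 := N1_add_N1_not a
  simp only [Bool.not_not, ← pr_not]
  exact if_congr (by omega) rfl rfl

end Counting

namespace DTree

variable {n : ℕ}

def mirror : DTree n → DTree n
  | leaf v => leaf v
  | node i t₀ t₁ => node i (mirror t₁) (mirror t₀)

lemma mirror_path (T : DTree n) (a : Fin n → Bool) : T.mirror.path a = T.path fun i => !a i := by
  induction T with
  | leaf => rfl
  | node i t₀ t₁ ih₀ ih₁ => cases h : a i <;> simp [mirror, path, h, ih₀, ih₁]

lemma Full.mirror {T : DTree n} {s : Finset (Fin n)} (h : T.Full s) : T.mirror.Full s := by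
  induction T generalizing s with
  | leaf => exact h
  | node i t₀ t₁ ih₀ ih₁ => exact ⟨h.1, ih₁ h.2.2, ih₀ h.2.1⟩

end DTree

theorem sum_stopCount_ofFn_le {n : ℕ} {p : Fin n → ℝ} (hp : ∀ i, 0 ≤ p i ∧ p i ≤ 1)
    {σ : Equiv.Perm (Fin n)} (hσ : ∀ s t : Fin n, s ≤ t → p (σ t) ≤ p (σ s)) {T : DTree n}
    (hT : T.Full ∅) {m L U : ℕ} (hm : m ≤ L) :
    ∑ a ∈ univ.filter (fun a : Fin n → Bool => L ≤ N1 a ∧ N1 a < U),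
        (stopCount a m (List.ofFn fun t => σ t) : ℝ) * pr p a ≤
      ∑ a ∈ univ.filter (fun a : Fin n → Bool => L ≤ N1 a ∧ N1 a < U),
        (stopCount a m (T.path a) : ℝ) * pr p a := by
  have hσl : (List.ofFn fun t => σ t) ~ univ.toList :=
    (perm_ext_iff_of_nodup (nodup_ofFn.2 σ.injective) (nodup_toList _)).2 fun x => by
      simpa using σ.surjective x
  have hsorted : ((List.ofFn fun t => σ t).map p).Pairwise (· ≥ ·) := by
    rw [map_ofFn, pairwise_ofFn]
    exact fun s t hst => hσ s t hst.le
  rw [sum_filter_N1_eq_blockCost p (fun _ => hσl),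
    sum_filter_N1_eq_blockCost p fun a => by simpa using hT.path_perm a,
    blockCost_const (nodup_ofFn.2 σ.injective) hm]
  exact hT.seqCost_le_blockCost hp hsorted (by simpa using hσl.map p) hm

theorem stmt3_general {n : ℕ} (p : Fin n → ℝ)
    (hp : ∀ i, 0 < p i ∧ p i < 1)
    (α : ℕ → ℕ)
    (j : ℕ)
    (σ1 σ0 : Equiv.Perm (Fin n))
    (hσ1 : ∀ s t : Fin n, s ≤ t → p (σ1 t) ≤ p (σ1 s))
    (hσ0 : ∀ s t : Fin n, s ≤ t → p (σ0 s) ≤ p (σ0 t))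
    (T : DTree n) (hT : T.Full ∅) :
    (∑ a ∈ Finset.univ.filter (fun a : Fin n → Bool => α j ≤ N1 a ∧ N1 a < α (j + 1)),
        (stopCount a (α j) (List.ofFn (fun t => σ1 t)) : ℝ) * pr p a
      ≤ ∑ a ∈ Finset.univ.filter (fun a : Fin n → Bool => α j ≤ N1 a ∧ N1 a < α (j + 1)),
        (stopCount a (α j) (T.path a) : ℝ) * pr p a) ∧
    (∑ a ∈ Finset.univ.filter (fun a : Fin n → Bool => α j ≤ N1 a ∧ N1 a < α (j + 1)),
        (stopCount (fun i => !a i) (n + 1 - α (j + 1)) (List.ofFn (fun t => σ0 t)) : ℝ) * pr p a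
      ≤ ∑ a ∈ Finset.univ.filter (fun a : Fin n → Bool => α j ≤ N1 a ∧ N1 a < α (j + 1)),
        (stopCount (fun i => !a i) (n + 1 - α (j + 1)) (T.path a) : ℝ) * pr p a) := by
  have hp₁ : ∀ i, 0 ≤ p i ∧ p i ≤ 1 := fun i => ⟨(hp i).1.le, (hp i).2.le⟩
  have hp₀ : ∀ i, 0 ≤ 1 - p i ∧ 1 - p i ≤ 1 := fun i => ⟨by linarith [hp i], by linarith [hp i]⟩
  refine ⟨sum_stopCount_ofFn_le hp₁ hσ1 hT le_rfl, ?_⟩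
  rw [sum_filter_N1_not p (fun _ => List.ofFn fun t => σ0 t), sum_filter_N1_not p T.path]
  simp only [← DTree.mirror_path]
  exact sum_stopCount_ofFn_le hp₀ (fun s t hst => by linarith [hσ0 s t hst]) hT.mirror le_rfl

theorem stmt3 {n : ℕ} (hn : 1 ≤ n) (p : Fin n → ℝ)
    (hp : ∀ i, 0 < p i ∧ p i < 1)
    (B : ℕ) (hB : 2 ≤ B) (α : ℕ → ℕ)
    (hα1 : α 1 = 0) (hαtop : α (B + 1) = n + 1)
    (hmono : ∀ j, 1 ≤ j → j ≤ B → α j < α (j + 1))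
    (j : ℕ) (hj1 : 1 ≤ j) (hjB : j ≤ B)
    (σ1 σ0 : Equiv.Perm (Fin n))
    (hσ1 : ∀ s t : Fin n, s ≤ t → p (σ1 t) ≤ p (σ1 s))
    (hσ0 : ∀ s t : Fin n, s ≤ t → p (σ0 s) ≤ p (σ0 t))
    (T : DTree n) (hT : T.Full ∅) :
    (∑ a ∈ Finset.univ.filter (fun a : Fin n → Bool => α j ≤ N1 a ∧ N1 a < α (j + 1)),
        (stopCount a (α j) (List.ofFn (fun t => σ1 t)) : ℝ) * pr p a
      ≤ ∑ a ∈ Finset.univ.filter (fun a : Fin n → Bool => α j ≤ N1 a ∧ N1 a < α (j + 1)),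
        (stopCount a (α j) (T.path a) : ℝ) * pr p a) ∧
    (∑ a ∈ Finset.univ.filter (fun a : Fin n → Bool => α j ≤ N1 a ∧ N1 a < α (j + 1)),
        (stopCount (fun i => !a i) (n + 1 - α (j + 1)) (List.ofFn (fun t => σ0 t)) : ℝ) * pr p a
      ≤ ∑ a ∈ Finset.univ.filter (fun a : Fin n → Bool => α j ≤ N1 a ∧ N1 a < α (j + 1)),
        (stopCount (fun i => !a i) (n + 1 - α (j + 1)) (T.path a) : ℝ) * pr p a) :=
  stmt3_general p hp α j σ1 σ0 hσ1 hσ0 T hT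
end
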